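/- For every 0 < α ≤ 1, the function f_α(y) = (α/(π|y|)) ∫_0^1 sin(t|y|) t^{α−1} dt (for y ≠ 0) is nonnegative almost everywhere, satisfies ∫_ℝ f_α(y) dy = 1, and the probability measure μ_α on ℝ with density f_α has characteristic function ∫_ℝ e^{ity} f_α(y) dy = (1 − |t|^α)_+ for all t ∈ ℝ, where (u)_+ = max(u,0). -/

import Mathlib

/-!
The function `g(t) = (1 - |t|^α)_+` is continuous, even and compactly supported, so its Fourier
transform at `y ≠ 0` is `2 ∫₀¹ (1 - t^α) cos(2π|y|t) dt`, which one integration by parts turns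
into `2π f_α(2πy)`. With `I(z) = ∫₀¹ sin(tz) t^(α-1) dt` (`sinRpowIntegral`) and
`J(z) = ∫₀¹ t^(α-2) (1 - cos(tz)) dt ≥ 0` (`oneSubCosRpowIntegral`), a second integration by parts
gives `z I(z) = 1 - cos z + (1 - α) J(z)`. For `α ≤ 1` this makes `I`, hence `f_α`, nonnegative,
and together with `1 - cos x ≤ 2 x^(1-α/2)` it gives `I(z) = O(z^(-α/2))`, so
`f_α(y) = O(|y|^(-1-α/2))` is integrable. Fourier inversion then exhibits `g` as the characteristic
function of `f_α`; at `t = 0` this says that `f_α` has total mass `1`.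
-/

open MeasureTheory Set Real Filter Asymptotics
open scoped FourierTransform Topology

namespace Real

lemma one_sub_cos_nonneg (x : ℝ) : 0 ≤ 1 - cos x := sub_nonneg.2 (cos_le_one x)

lemma one_sub_cos_le_sq_div_two (x : ℝ) : 1 - cos x ≤ x ^ 2 / 2 := by
  linarith [one_sub_sq_div_two_le_cos (x := x)]

lemma one_sub_cos_le_two_mul_rpow {x β : ℝ} (hx : 0 ≤ x) (hβ0 : 0 ≤ β) (hβ2 : β ≤ 2) :
    1 - cos x ≤ 2 * x ^ β := by
  rcases le_or_gt x 1 with hx1 | hx1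
  · have : x ^ (2 : ℝ) ≤ x ^ β := rpow_le_rpow_of_exponent_ge' hx hx1 hβ0 hβ2
    rw [rpow_two] at this
    linarith [one_sub_cos_le_sq_div_two x, sq_nonneg x]
  · linarith [neg_one_le_cos x, one_le_rpow hx1.le hβ0]

lemma rpow_mul_one_sub_cos_le {t : ℝ} (ht : 0 < t) (β z : ℝ) :
    t ^ β * (1 - cos (t * z)) ≤ z ^ 2 / 2 * t ^ (β + 2) := by
  rw [rpow_add ht, rpow_two]
  calc t ^ β * (1 - cos (t * z)) ≤ t ^ β * ((t * z) ^ 2 / 2) :=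
        mul_le_mul_of_nonneg_left (one_sub_cos_le_sq_div_two _) (rpow_nonneg ht.le β)
    _ = z ^ 2 / 2 * (t ^ β * t ^ 2) := by ring

theorem fourier_ofReal_of_even {f : ℝ → ℝ} (hf : Integrable f) (heven : ∀ x, f (-x) = f x)
    (w : ℝ) : 𝓕 (fun x => (f x : ℂ)) w = ↑(∫ x, cos (2 * π * x * w) * f x) := by
  set e : ℝ → ℂ := fun x => Complex.exp (↑(-2 * π * x * w) * Complex.I) * f x
  have he : Integrable e := by
    refine (hf.ofReal (𝕜 := ℂ)).bdd_mul (c := 1) (by fun_prop) (.of_forall fun x => ?_)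
    rw [Complex.norm_exp_ofReal_mul_I]
  have hsym : ∀ x, e x + e (-x) = ↑(2 * (cos (2 * π * x * w) * f x)) := by
    intro x
    simp only [e, heven, ← add_mul]
    push_cast
    rw [← mul_assoc, Complex.two_cos]
    ring_nf
  have hfour : 𝓕 (fun x => (f x : ℂ)) w = ∫ x, e x := by
    simp only [fourier_real_eq_integral_exp_smul, smul_eq_mul, e]
  calc 𝓕 (fun x => (f x : ℂ)) w = ((∫ x, e x) + ∫ x, e (-x)) / 2 := by
        rw [integral_neg_eq_self, hfour]; ring
    _ = ↑(∫ x, cos (2 * π * x * w) * f x) := by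
        rw [← integral_add he he.comp_neg]
        simp only [hsym]
        rw [integral_complex_ofReal, integral_const_mul]
        push_cast
        ring

end Real

lemma intervalIntegrable_rpow_mul_one_sub_cos {β : ℝ} (hβ : -3 < β) (z : ℝ) :
    IntervalIntegrable (fun t => t ^ β * (1 - cos (t * z))) volume 0 1 := by
  rw [intervalIntegrable_iff_integrableOn_Ioc_of_le zero_le_one]
  have hbound : IntegrableOn (fun t : ℝ => z ^ 2 / 2 * t ^ (β + 2)) (Ioc 0 1) :=
    ((intervalIntegral.intervalIntegrable_rpow' (by linarith)).const_mul _).1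
  refine hbound.mono' ?_ ((ae_restrict_iff' measurableSet_Ioc).2 (.of_forall fun t ht => ?_))
  · exact (ContinuousOn.mul (continuousOn_id.rpow_const fun t ht => Or.inl ht.1.ne')
      (by fun_prop)).aestronglyMeasurable measurableSet_Ioc
  · rw [norm_of_nonneg (mul_nonneg (rpow_nonneg ht.1.le β) (one_sub_cos_nonneg _))]
    exact rpow_mul_one_sub_cos_le ht.1 β z

lemma continuousOn_rpow_mul_one_sub_cos {β : ℝ} (hβ : -2 < β) (z : ℝ) :
    ContinuousOn (fun t => t ^ β * (1 - cos (t * z))) (Ici 0) := by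
  intro t ht
  rcases (mem_Ici.1 ht).eq_or_lt with rfl | ht0
  · have hlim : Tendsto (fun s : ℝ => z ^ 2 / 2 * s ^ (β + 2)) (𝓝[Ici 0] 0) (𝓝 0) := by
      have := ((continuousAt_rpow_const 0 (β + 2) (Or.inr (by linarith))).tendsto.mono_left
        (nhdsWithin_le_nhds (s := Ici 0))).const_mul (z ^ 2 / 2)
      rwa [zero_rpow (by linarith), mul_zero] at this
    simp only [ContinuousWithinAt, zero_mul, cos_zero, sub_self, mul_zero]
    refine squeeze_zero' (eventually_nhdsWithin_of_forall fun s hs =>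
      mul_nonneg (rpow_nonneg hs β) (one_sub_cos_nonneg _)) ?_ hlim
    refine eventually_nhdsWithin_of_forall fun s hs => ?_
    rcases (mem_Ici.1 hs).eq_or_lt with rfl | hs0
    · simp only [zero_mul, cos_zero, sub_self, mul_zero]
      positivity
    · exact rpow_mul_one_sub_cos_le hs0 β z
  · exact ((continuousAt_rpow_const t β (Or.inl ht0.ne')).mul
      (by fun_prop)).continuousWithinAt

noncomputable def sinRpowIntegral (α z : ℝ) : ℝ :=
  ∫ t in (0:ℝ)..1, sin (t * z) * t ^ (α - 1)

noncomputable def oneSubCosRpowIntegral (α z : ℝ) : ℝ :=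
  ∫ t in (0:ℝ)..1, t ^ (α - 2) * (1 - cos (t * z))

section

variable {α : ℝ}

theorem integral_one_sub_rpow_mul_cos (hα : 0 < α) {z : ℝ} (hz : z ≠ 0) :
    ∫ t in (0:ℝ)..1, (1 - t ^ α) * cos (t * z) = α / z * sinRpowIntegral α z := by
  have hparts := intervalIntegral.integral_mul_deriv_eq_deriv_mul_of_hasDerivAt (a := 0) (b := 1)
    (u := fun t => 1 - t ^ α) (v := fun t => sin (t * z) / z)
    (u' := fun t => -(α * t ^ (α - 1))) (v' := fun t => cos (t * z))
    (continuous_const.sub (continuous_id.rpow_const fun _ => Or.inr hα.le)).continuousOn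
    (by fun_prop)
    (fun t ht => by
      rw [min_eq_left zero_le_one] at ht
      exact (hasDerivAt_rpow_const (Or.inl ht.1.ne')).const_sub 1)
    (fun t _ => by simpa [hz] using ((hasDerivAt_mul_const z).sin).div_const z)
    ((intervalIntegral.intervalIntegrable_rpow' (by linarith)).const_mul α).neg
    (Continuous.intervalIntegrable (by fun_prop) 0 1)
  have hsin : ∀ t : ℝ, -(α * t ^ (α - 1)) * (sin (t * z) / z)
      = -(α / z) * (sin (t * z) * t ^ (α - 1)) := fun t => by ring
  simp only [hparts, hsin, intervalIntegral.integral_const_mul, one_rpow, zero_rpow hα.ne',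
    sub_self, zero_mul, sin_zero, zero_div, mul_zero, sub_zero]
  rw [sinRpowIntegral]
  ring

theorem mul_sinRpowIntegral (hα : 0 < α) (z : ℝ) :
    z * sinRpowIntegral α z = 1 - cos z + (1 - α) * oneSubCosRpowIntegral α z := by
  have hderiv : ∀ t ∈ Ioo (0:ℝ) 1, HasDerivAt (fun t => t ^ (α - 1) * (1 - cos (t * z)))
      ((α - 1) * (t ^ (α - 2) * (1 - cos (t * z))) + z * (sin (t * z) * t ^ (α - 1))) t := by
    intro t ht
    have hpow := hasDerivAt_rpow_const (x := t) (p := α - 1) (Or.inl ht.1.ne')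
    have hcos := ((hasDerivAt_mul_const (x := t) z).cos).const_sub 1
    refine (hpow.mul hcos).congr_deriv ?_
    rw [show α - 1 - 1 = α - 2 by ring]
    ring
  have hint₁ := (intervalIntegrable_rpow_mul_one_sub_cos (β := α - 2) (by linarith) z).const_mul
    (α - 1)
  have hint₂ : IntervalIntegrable (fun t => z * (sin (t * z) * t ^ (α - 1))) volume 0 1 :=
    ((intervalIntegral.intervalIntegrable_rpow' (by linarith)).continuousOn_mul
      (by fun_prop)).const_mul z
  have hftc := intervalIntegral.integral_eq_sub_of_hasDerivAt_of_le zero_le_one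
    ((continuousOn_rpow_mul_one_sub_cos (by linarith) z).mono Icc_subset_Ici_self) hderiv
    (hint₁.add hint₂)
  rw [intervalIntegral.integral_add hint₁ hint₂, intervalIntegral.integral_const_mul,
    intervalIntegral.integral_const_mul] at hftc
  simp only [one_rpow, one_mul, zero_mul, cos_zero, sub_self, mul_zero, sub_zero] at hftc
  rw [sinRpowIntegral, oneSubCosRpowIntegral]
  linarith

lemma oneSubCosRpowIntegral_nonneg (z : ℝ) : 0 ≤ oneSubCosRpowIntegral α z :=
  intervalIntegral.integral_nonneg zero_le_one fun _ ht =>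
    mul_nonneg (rpow_nonneg ht.1 _) (one_sub_cos_nonneg _)

theorem sinRpowIntegral_nonneg (hα : 0 < α) (hα1 : α ≤ 1) {z : ℝ} (hz : 0 ≤ z) :
    0 ≤ sinRpowIntegral α z := by
  rcases hz.eq_or_lt with rfl | hz
  · simp [sinRpowIntegral]
  · refine nonneg_of_mul_nonneg_right ?_ hz
    rw [mul_sinRpowIntegral hα]
    have := oneSubCosRpowIntegral_nonneg (α := α) z
    have := one_sub_cos_nonneg z
    have : 0 ≤ 1 - α := by linarith
    positivity

theorem oneSubCosRpowIntegral_le (hα : 0 < α) (hα2 : α ≤ 2) {z : ℝ} (hz : 0 ≤ z) :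
    oneSubCosRpowIntegral α z ≤ 4 / α * z ^ (1 - α / 2) := by
  have hdom : ∀ t ∈ Ioo (0:ℝ) 1, t ^ (α - 2) * (1 - cos (t * z))
      ≤ 2 * z ^ (1 - α / 2) * t ^ (α / 2 - 1) := by
    intro t ht
    have hcos := one_sub_cos_le_two_mul_rpow (mul_nonneg ht.1.le hz)
      (show 0 ≤ 1 - α / 2 by linarith) (show 1 - α / 2 ≤ 2 by linarith)
    calc t ^ (α - 2) * (1 - cos (t * z)) ≤ t ^ (α - 2) * (2 * (t * z) ^ (1 - α / 2)) :=
          mul_le_mul_of_nonneg_left hcos (rpow_nonneg ht.1.le _)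
      _ = 2 * z ^ (1 - α / 2) * (t ^ (α - 2) * t ^ (1 - α / 2)) := by
          rw [mul_rpow ht.1.le hz]; ring
      _ = 2 * z ^ (1 - α / 2) * t ^ (α / 2 - 1) := by
          rw [← rpow_add ht.1]; ring_nf
  calc oneSubCosRpowIntegral α z
      ≤ ∫ t in (0:ℝ)..1, 2 * z ^ (1 - α / 2) * t ^ (α / 2 - 1) :=
        intervalIntegral.integral_mono_on_of_le_Ioo zero_le_one
          (intervalIntegrable_rpow_mul_one_sub_cos (by linarith) z)
          ((intervalIntegral.intervalIntegrable_rpow' (by linarith)).const_mul _) hdom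
    _ = 4 / α * z ^ (1 - α / 2) := by
        rw [intervalIntegral.integral_const_mul, integral_rpow (Or.inl (by linarith)),
          sub_add_cancel, one_rpow, zero_rpow (by positivity)]
        field_simp
        ring

theorem sinRpowIntegral_le (hα : 0 < α) (hα1 : α ≤ 1) {z : ℝ} (hz : 0 < z) :
    sinRpowIntegral α z ≤ (2 + 4 / α) * z ^ (-(α / 2)) := by
  have hcos := one_sub_cos_le_two_mul_rpow hz.le (show 0 ≤ 1 - α / 2 by linarith)
    (show 1 - α / 2 ≤ 2 by linarith)
  have hJ := oneSubCosRpowIntegral_le hα (by linarith) hz.le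
  have hJ0 := oneSubCosRpowIntegral_nonneg (α := α) z
  have hmul : z * sinRpowIntegral α z ≤ z * ((2 + 4 / α) * z ^ (-(α / 2))) := by
    rw [mul_sinRpowIntegral hα, ← mul_assoc, mul_comm z, mul_assoc, ← rpow_one_add' hz.le
      (by linarith), show 1 + -(α / 2) = 1 - α / 2 by ring]
    nlinarith
  exact le_of_mul_le_mul_left hmul hz

noncomputable def weaklyStableCharFun (α t : ℝ) : ℝ := max (1 - |t| ^ α) 0

noncomputable def weaklyStableDensity (α y : ℝ) : ℝ := α / (π * |y|) * sinRpowIntegral α |y|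

lemma weaklyStableDensity_nonneg (hα : 0 < α) (hα1 : α ≤ 1) (y : ℝ) :
    0 ≤ weaklyStableDensity α y :=
  mul_nonneg (by positivity) (sinRpowIntegral_nonneg hα hα1 (abs_nonneg y))

lemma weaklyStableDensity_le (hα : 0 < α) (hα1 : α ≤ 1) {y : ℝ} (hy : 0 < y) :
    weaklyStableDensity α y ≤ α / π * (2 + 4 / α) * y ^ (-(1 + α / 2)) := by
  rw [weaklyStableDensity, abs_of_pos hy, neg_add, rpow_add hy, rpow_neg_one]
  calc α / (π * y) * sinRpowIntegral α y ≤ α / (π * y) * ((2 + 4 / α) * y ^ (-(α / 2))) :=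
        mul_le_mul_of_nonneg_left (sinRpowIntegral_le hα hα1 hy) (by positivity)
    _ = α / π * (2 + 4 / α) * (y⁻¹ * y ^ (-(α / 2))) := by field_simp

lemma continuous_weaklyStableCharFun (hα : 0 ≤ α) : Continuous (weaklyStableCharFun α) :=
  (continuous_const.sub (continuous_abs.rpow_const fun _ => Or.inr hα)).max continuous_const

lemma weaklyStableCharFun_neg (t : ℝ) : weaklyStableCharFun α (-t) = weaklyStableCharFun α t := by
  rw [weaklyStableCharFun, weaklyStableCharFun, abs_neg]

lemma weaklyStableCharFun_of_one_le_abs (hα : 0 ≤ α) {t : ℝ} (ht : 1 ≤ |t|) :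
    weaklyStableCharFun α t = 0 :=
  max_eq_right (by linarith [one_le_rpow ht hα])

lemma weaklyStableCharFun_of_mem_Icc (hα : 0 ≤ α) {t : ℝ} (ht : t ∈ Icc 0 1) :
    weaklyStableCharFun α t = 1 - t ^ α := by
  rw [weaklyStableCharFun, abs_of_nonneg ht.1]
  exact max_eq_left (sub_nonneg.2 (rpow_le_one ht.1 ht.2 hα))

lemma integrable_weaklyStableCharFun (hα : 0 ≤ α) : Integrable (weaklyStableCharFun α) :=
  ((continuous_weaklyStableCharFun hα).integrable_of_hasCompactSupport
    (HasCompactSupport.intro isCompact_Icc fun _ ht => weaklyStableCharFun_of_one_le_abs hα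
      (not_le.1 (mt abs_le.1 ht)).le))

theorem integral_cos_mul_weaklyStableCharFun (hα : 0 ≤ α) (z : ℝ) :
    ∫ v, cos (v * z) * weaklyStableCharFun α v
      = 2 * ∫ t in (0:ℝ)..1, (1 - t ^ α) * cos (t * z) := by
  have heven : ∀ v, cos (v * z) * weaklyStableCharFun α v
      = cos (|v| * z) * weaklyStableCharFun α |v| := by
    intro v
    rcases abs_choice v with h | h <;> rw [h]
    rw [weaklyStableCharFun_neg, neg_mul, cos_neg]
  rw [integral_congr_ae (.of_forall heven),
    integral_comp_abs (f := fun v => cos (v * z) * weaklyStableCharFun α v),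
    setIntegral_eq_of_subset_of_forall_sdiff_eq_zero measurableSet_Ioi Ioc_subset_Ioi_self
      fun t ht => ?_, intervalIntegral.integral_of_le zero_le_one]
  · refine congrArg _ (setIntegral_congr_fun measurableSet_Ioc fun t ht => ?_)
    rw [weaklyStableCharFun_of_mem_Icc hα (Ioc_subset_Icc_self ht), mul_comm]
  · have ht1 : 1 ≤ |t| := by
      rw [abs_of_pos ht.1]
      exact (not_le.1 fun h => ht.2 ⟨ht.1, h⟩).le
    rw [weaklyStableCharFun_of_one_le_abs hα ht1, mul_zero]

theorem fourier_weaklyStableCharFun (hα : 0 < α) {y : ℝ} (hy : y ≠ 0) :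
    𝓕 (fun t => (weaklyStableCharFun α t : ℂ)) y
      = ↑(2 * π * weaklyStableDensity α (2 * π * y)) := by
  have hcos : ∀ x, cos (2 * π * x * y) = cos (x * (2 * π * |y|)) := by
    intro x
    rcases abs_choice y with h | h <;> rw [h]
    · ring_nf
    · rw [← cos_neg]; ring_nf
  rw [fourier_ofReal_of_even (integrable_weaklyStableCharFun hα.le) weaklyStableCharFun_neg]
  congr 1
  simp_rw [hcos]
  rw [integral_cos_mul_weaklyStableCharFun hα.le, integral_one_sub_rpow_mul_cos hα
    (mul_ne_zero two_pi_pos.ne' (abs_ne_zero.2 hy)), weaklyStableDensity, abs_mul,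
    abs_of_pos two_pi_pos]
  field_simp

theorem integrable_fourier_weaklyStableCharFun (hα : 0 < α) (hα1 : α ≤ 1) :
    Integrable (𝓕 (fun t => (weaklyStableCharFun α t : ℂ))) := by
  have hint := integrable_weaklyStableCharFun hα.le
  have hcont : Continuous (𝓕 (fun t => (weaklyStableCharFun α t : ℂ))) :=
    VectorFourier.fourierIntegral_continuous Real.continuous_fourierChar continuous_inner
      hint.ofReal
  have heven : ∀ y, 𝓕 (fun t => (weaklyStableCharFun α t : ℂ)) (-y)
      = 𝓕 (fun t => (weaklyStableCharFun α t : ℂ)) y := by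
    intro y
    simp only [fourier_ofReal_of_even hint weaklyStableCharFun_neg, mul_neg, cos_neg]
  have hdecay : 𝓕 (fun t => (weaklyStableCharFun α t : ℂ))
      =O[atTop] fun y => y ^ (-(1 + α / 2)) := by
    refine IsBigO.of_bound (2 * π * (α / π * (2 + 4 / α)) * (2 * π) ^ (-(1 + α / 2))) ?_
    filter_upwards [eventually_gt_atTop 0] with y hy
    rw [fourier_weaklyStableCharFun hα hy.ne', Complex.norm_real,
      norm_of_nonneg (mul_nonneg two_pi_pos.le (weaklyStableDensity_nonneg hα hα1 _)),
      norm_of_nonneg (rpow_nonneg hy.le _)]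
    calc 2 * π * weaklyStableDensity α (2 * π * y)
        ≤ 2 * π * (α / π * (2 + 4 / α) * (2 * π * y) ^ (-(1 + α / 2))) :=
          mul_le_mul_of_nonneg_left (weaklyStableDensity_le hα hα1 (by positivity))
            two_pi_pos.le
      _ = _ := by rw [mul_rpow two_pi_pos.le hy.le]; ring
  exact hcont.locallyIntegrable.integrable_of_isBigO_atTop_of_norm_isNegInvariant
    (.of_forall fun y => by simp [heven]) hdecay
    (integrableAtFilter_rpow_atTop_iff.2 (by linarith))

theorem integral_exp_mul_weaklyStableDensity (hα : 0 < α) (hα1 : α ≤ 1) (t : ℝ) :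
    ∫ y : ℝ, Complex.exp (Complex.I * t * y) * (weaklyStableDensity α y : ℂ)
      = weaklyStableCharFun α t := by
  have hinv := (integrable_weaklyStableCharFun hα.le).ofReal.fourierInv_fourier_eq
    (integrable_fourier_weaklyStableCharFun hα hα1)
    (Complex.continuous_ofReal.comp (continuous_weaklyStableCharFun hα.le)).continuousAt (v := t)
  rw [fourierInv_eq_fourier_neg, fourier_real_eq_integral_exp_smul] at hinv
  have hae : (fun v : ℝ => Complex.exp (↑(-2 * π * v * -t) * Complex.I)
        • 𝓕 (fun t => (weaklyStableCharFun α t : ℂ)) v)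
      =ᵐ[volume] fun v => (2 * π) • (fun y : ℝ =>
        Complex.exp (Complex.I * t * y) * (weaklyStableDensity α y : ℂ)) (2 * π * v) := by
    filter_upwards [Measure.ae_ne volume 0] with v hv
    rw [fourier_weaklyStableCharFun hα hv, smul_eq_mul, Complex.real_smul]
    push_cast
    ring_nf
  rw [integral_congr_ae hae, integral_smul, Measure.integral_comp_mul_left (fun y : ℝ =>
      Complex.exp (Complex.I * t * y) * (weaklyStableDensity α y : ℂ)), smul_smul, abs_inv,
    abs_of_pos two_pi_pos, mul_inv_cancel₀ two_pi_pos.ne', one_smul] at hinv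
  exact hinv

theorem integral_weaklyStableDensity (hα : 0 < α) (hα1 : α ≤ 1) :
    ∫ y, weaklyStableDensity α y = 1 := by
  have h := integral_exp_mul_weaklyStableDensity hα hα1 0
  simp only [Complex.ofReal_zero, mul_zero, zero_mul, Complex.exp_zero, one_mul,
    integral_complex_ofReal, weaklyStableCharFun, abs_zero, zero_rpow hα.ne', sub_zero,
    max_eq_left zero_le_one] at h
  exact_mod_cast h

end

theorem kendall_weakly_stable_density
    (α : ℝ) (hα : 0 < α) (hα1 : α ≤ 1) :
    (∀ᵐ y : ℝ ∂volume,
        0 ≤ α / (π * |y|) * ∫ t in (0:ℝ)..1, Real.sin (t * |y|) * t ^ (α - 1))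
    ∧ (∫ y : ℝ,
        α / (π * |y|) * ∫ t in (0:ℝ)..1, Real.sin (t * |y|) * t ^ (α - 1)) = 1
    ∧ (∀ t : ℝ,
        ∫ y : ℝ, Complex.exp (Complex.I * t * y)
            * ((α / (π * |y|) * ∫ s in (0:ℝ)..1, Real.sin (s * |y|) * s ^ (α - 1) : ℝ) : ℂ)
          = ((max (1 - |t| ^ α) 0 : ℝ) : ℂ)) :=
  ⟨.of_forall (weaklyStableDensity_nonneg hα hα1), integral_weaklyStableDensity hα hα1,
    integral_exp_mul_weaklyStableDensity hα hα1⟩
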